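/- μ^ζ(Reach) = 1 if and only if μ(N = ∞) = 1. (Theorem 1(2), Markov-chain form: for a fixed strategy, the chance of reaching the target in the augmented MDP M^ζ is 1 if and only if the chance of satisfying the Büchi objective, i.e. taking infinitely many accepting transitions, in the product MDP is 1.) -/

import Mathlib

open MeasureTheory ProbabilityTheory
open scoped ENNReal Classical

/-- The natural σ-algebra on `Option S`: a set is measurable iff its trace on `S` is. -/
instance {S : Type*} [m : MeasurableSpace S] : MeasurableSpace (Option S) := m.map some

/-- Transition probabilities of the `ζ`-absorbed chain on `Option S`: from `some s`, each
accepting transition `(s, s') ∈ Acc` diverts mass `(1 − ζ) · κ s s'` to the sink `none` and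
keeps mass `ζ · κ s s'` on `some s'`; non-accepting transitions are unchanged; the sink
`none` is absorbing. -/
noncomputable def absorbProb {S : Type*} (ζ : ℝ≥0∞) (κ : S → PMF S) (Acc : Set (S × S)) :
    Option S → Option S → ℝ≥0∞
  | none, none => 1
  | none, some _ => 0
  | some s, none => (1 - ζ) * ∑' s' : S, if (s, s') ∈ Acc then κ s s' else 0
  | some s, some s' => if (s, s') ∈ Acc then ζ * κ s s' else κ s s'

/-- `N ω`: the number of accepting transitions along the trajectory `ω`. -/
noncomputable def numAcc {S : Type*} (Acc : Set (S × S)) (ω : ℕ → S) : ℕ∞ :=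
  {i : ℕ | (ω i, ω (i + 1)) ∈ Acc}.encard

/-- `R ω`: the total reward along a trajectory of the absorbed chain, i.e. the number of
accepting transitions taken, including the one leading to the sink `none`, if any. -/
noncomputable def totalReward {S : Type*} (Acc : Set (S × S)) (ω : ℕ → Option S) : ℕ∞ :=
  {i : ℕ | ω (i + 1) = none}.encard +
    {i : ℕ | ∃ s s', ω i = some s ∧ ω (i + 1) = some s' ∧ (s, s') ∈ Acc}.encard

/-- The event of reaching the sink `none`. -/
def Reach {S : Type*} : Set (ℕ → Option S) := {ω | ∃ i, ω i = none}

/-!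
Surviving the first `n` steps of the absorbed chain along a path of the original chain costs a
factor `ζ` per accepting transition, so `μ^ζ(alive n) = E_μ[ζ ^ N_n]`, where `N_n` counts the
accepting transitions among the first `n` steps. Continuity from above and monotone convergence
give `μ^ζ(Reachᶜ) = E_μ[⨅ n, ζ ^ N_n]`, and for `0 < ζ < 1` the integrand vanishes exactly when
`N = ∞`. Hence `μ^ζ(Reach) = 1` iff `N = ∞` holds `μ`-almost surely.
-/

open Finset Preorder

instance {S : Type*} [MeasurableSpace S] [MeasurableSingletonClass S] :
    MeasurableSingletonClass (Option S) where
  measurableSet_singleton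
    | none => show MeasurableSet (some ⁻¹' {none}) by
        rw [Set.preimage_eq_empty (by simp)]; exact .empty
    | some a => show MeasurableSet (some ⁻¹' {some a}) by
        convert measurableSet_singleton a using 1; ext; simp

theorem iInf_pow_count_eq_zero_iff {p : ℕ → Prop} [DecidablePred p] {ζ : ℝ≥0∞}
    (hζ0 : ζ ≠ 0) (hζ1 : ζ < 1) :
    ⨅ n, ζ ^ Nat.count p n = 0 ↔ (Set.ofPred p).Infinite := by
  constructor
  · intro h
    by_contra hfin
    rw [Set.not_infinite] at hfin
    have hlb : ζ ^ #hfin.toFinset ≤ ⨅ n, ζ ^ Nat.count p n :=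
      le_iInf fun n => pow_le_pow_right_of_le_one' hζ1.le (Nat.count_le_card hfin n)
    exact pow_ne_zero _ hζ0 (le_zero_iff.mp (h ▸ hlb))
  · intro hinf
    have hpow : ⨅ k : ℕ, ζ ^ k = 0 :=
      iInf_eq_of_tendsto (fun _ _ h => pow_le_pow_right_of_le_one' hζ1.le h)
        (ENNReal.tendsto_pow_atTop_nhds_zero_of_lt_one hζ1)
    refine le_antisymm (hpow ▸ le_iInf fun k => ?_) zero_le
    exact iInf_le_of_le (Nat.nth p k) (by rw [Nat.count_nth_of_infinite hinf])

section Prefix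

variable {α : Type*} {n : ℕ}

def extendLe (n : ℕ) (g : Iic n → α) : ℕ → α := fun i => g ⟨min i n, by simp⟩

lemma extendLe_of_le (g : Iic n → α) {i : ℕ} (hi : i ≤ n) :
    extendLe n g i = g ⟨i, by simpa using hi⟩ := by
  simp only [extendLe, min_eq_left hi]

lemma DependsOn.apply_extendLe_frestrictLe {β : Type*} {F : (ℕ → α) → β}
    (hF : DependsOn F (Set.Iic n)) (ω : ℕ → α) : F (extendLe n (frestrictLe n ω)) = F ω :=
  hF fun _ hi => extendLe_of_le _ hi

lemma preimage_frestrictLe_singleton (g : Iic n → α) :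
    frestrictLe n ⁻¹' ({g} : Set (Iic n → α)) = {ω | ∀ i ≤ n, ω i = extendLe n g i} := by
  ext ω
  simp only [Set.mem_preimage, Set.mem_singleton_iff, Set.mem_ofPred_eq, funext_iff,
    Subtype.forall, mem_Iic, frestrictLe_apply]
  exact forall₂_congr fun i hi => by rw [extendLe_of_le g hi]

variable [MeasurableSpace α] [MeasurableSingletonClass α]

lemma DependsOn.measurable [Finite α] {β : Type*} [MeasurableSpace β] {F : (ℕ → α) → β}
    (hF : DependsOn F (Set.Iic n)) : Measurable F := by
  have hfactor : F = (F ∘ extendLe n) ∘ frestrictLe n :=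
    funext fun ω => (hF.apply_extendLe_frestrictLe ω).symm
  rw [hfactor]
  exact (measurable_of_finite _).comp (measurable_frestrictLe n)

lemma DependsOn.lintegral_eq_sum [Fintype α] (μ : Measure (ℕ → α)) {F : (ℕ → α) → ℝ≥0∞}
    (hF : DependsOn F (Set.Iic n)) :
    ∫⁻ ω, F ω ∂μ = ∑ g : Iic n → α, F (extendLe n g) * μ (frestrictLe n ⁻¹' {g}) := by
  calc ∫⁻ ω, F ω ∂μ = ∫⁻ ω, (F ∘ extendLe n) (frestrictLe n ω) ∂μ := by
        simp only [Function.comp_apply, hF.apply_extendLe_frestrictLe]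
    _ = ∫⁻ g, F (extendLe n g) ∂μ.map (frestrictLe n) :=
        (lintegral_map (measurable_of_finite _) (measurable_frestrictLe n)).symm
    _ = _ := by
        rw [lintegral_fintype]
        simp only [Measure.map_apply (measurable_frestrictLe n) (measurableSet_singleton _)]

end Prefix

def IsMarkovLaw {T : Type*} [MeasurableSpace T] [DecidableEq T] (P : T → T → ℝ≥0∞) (t₀ : T)
    (ν : Measure (ℕ → T)) : Prop :=
  ∀ (n : ℕ) (f : ℕ → T), ν {ω | ∀ i ≤ n, ω i = f i} =
    (if f 0 = t₀ then 1 else 0) * ∏ i ∈ range n, P (f i) (f (i + 1))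

section AbsorbedChain

variable {S : Type*}

noncomputable def numAccBefore (Acc : Set (S × S)) (ω : ℕ → S) (n : ℕ) : ℕ :=
  Nat.count (fun i => (ω i, ω (i + 1)) ∈ Acc) n

def alive (n : ℕ) : Set (ℕ → Option S) := {ω | ∀ i ≤ n, ω i ≠ none}

lemma dependsOn_pow_numAccBefore (ζ : ℝ≥0∞) (Acc : Set (S × S)) (n : ℕ) :
    DependsOn (fun ω => ζ ^ numAccBefore Acc ω n) (Set.Iic n) := by
  intro ω ω' h
  simp only [numAccBefore, Nat.count_eq_card_filter_range]
  congr 2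
  refine filter_congr fun i hi => ?_
  have hi : i < n := mem_range.mp hi
  rw [h i hi.le, h (i + 1) hi]

lemma antitone_pow_numAccBefore {ζ : ℝ≥0∞} (hζ : ζ ≤ 1) (Acc : Set (S × S)) :
    Antitone fun n ω => ζ ^ numAccBefore Acc ω n :=
  fun _ _ hab _ => pow_le_pow_right_of_le_one' hζ (Nat.count_monotone _ hab)

lemma iInf_pow_numAccBefore_eq_zero_iff {ζ : ℝ≥0∞} (hζ0 : ζ ≠ 0) (hζ1 : ζ < 1)
    (Acc : Set (S × S)) (ω : ℕ → S) :
    ⨅ n, ζ ^ numAccBefore Acc ω n = 0 ↔ numAcc Acc ω = ⊤ := by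
  rw [numAcc, Set.encard_eq_top_iff]
  exact iInf_pow_count_eq_zero_iff hζ0 hζ1

lemma absorbProb_some_some (ζ : ℝ≥0∞) (κ : S → PMF S) (Acc : Set (S × S)) (s s' : S) :
    absorbProb ζ κ Acc (some s) (some s') = κ s s' * if (s, s') ∈ Acc then ζ else 1 := by
  simp only [absorbProb]
  split_ifs <;> simp [mul_comm]

lemma prod_absorbProb_some (ζ : ℝ≥0∞) (κ : S → PMF S) (Acc : Set (S × S)) (f : ℕ → S)
    (n : ℕ) :
    ∏ i ∈ range n, absorbProb ζ κ Acc (some (f i)) (some (f (i + 1))) =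
      (∏ i ∈ range n, κ (f i) (f (i + 1))) * ζ ^ numAccBefore Acc f n := by
  simp only [absorbProb_some_some, prod_mul_distrib, numAccBefore,
    Nat.count_eq_card_filter_range, prod_ite, prod_const, one_pow, mul_one]

lemma alive_eq_preimage (n : ℕ) :
    alive n = frestrictLe n ⁻¹' Set.range fun (g : Iic n → S) j => some (g j) := by
  ext ω
  simp only [alive, Set.mem_ofPred_eq, Set.mem_preimage, Set.mem_range, funext_iff,
    frestrictLe_apply, Subtype.forall, mem_Iic]
  constructor
  · intro h
    choose g hg using fun j : Iic n => Option.ne_none_iff_exists'.mp (h j (mem_Iic.mp j.2))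
    exact ⟨g, fun i hi => (hg ⟨i, mem_Iic.mpr hi⟩).symm⟩
  · rintro ⟨g, hg⟩ i hi
    simp [← hg i hi]

lemma antitone_alive : Antitone (alive (S := S)) :=
  fun _ _ hab _ h i hi => h i (hi.trans hab)

lemma compl_reach_eq_iInter_alive : (Reach (S := S))ᶜ = ⋂ n, alive n := by
  ext ω
  simp only [Reach, alive, Set.mem_compl_iff, Set.mem_ofPred_eq, not_exists, Set.mem_iInter]
  exact ⟨fun h _ i _ => h i, fun h i => h i i le_rfl⟩

variable [MeasurableSpace S] {ζ : ℝ≥0∞} {κ : S → PMF S} {Acc : Set (S × S)} {s₀ : S}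
  {μ : Measure (ℕ → S)} {μζ : Measure (ℕ → Option S)}

lemma measure_cylinder_some (hμ : IsMarkovLaw (fun s s' => κ s s') s₀ μ)
    (hμζ : IsMarkovLaw (absorbProb ζ κ Acc) (some s₀) μζ) (n : ℕ) (f : ℕ → S) :
    μζ {ω | ∀ i ≤ n, ω i = some (f i)} =
      μ {ω | ∀ i ≤ n, ω i = f i} * ζ ^ numAccBefore Acc f n := by
  rw [hμζ n (fun i => some (f i)), hμ n f, prod_absorbProb_some]
  simp only [Option.some_inj, mul_assoc]

variable [Fintype S] [MeasurableSingletonClass S]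

lemma measurableSet_reach : MeasurableSet (Reach (S := S)) := by
  rw [Reach, Set.ofPred_exists]
  exact MeasurableSet.iUnion fun i => measurableSet_eq_fun (measurable_pi_apply i) measurable_const

lemma measurableSet_alive (n : ℕ) : MeasurableSet (alive (S := S) n) := by
  rw [alive_eq_preimage]
  exact measurable_frestrictLe n (Set.toFinite _).measurableSet

lemma measure_alive_eq_sum (ν : Measure (ℕ → Option S)) (n : ℕ) :
    ν (alive n) = ∑ g : Iic n → S, ν (frestrictLe n ⁻¹' {fun j => some (g j)}) := by
  let liftSome : (Iic n → S) ↪ (Iic n → Option S) :=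
    ⟨(some ∘ ·), (Option.some_injective S).comp_left⟩
  calc ν (alive n) = ν (frestrictLe n ⁻¹' ↑(univ.map liftSome)) := by
        rw [alive_eq_preimage, coe_map, coe_univ, Set.image_univ]; rfl
    _ = ∑ h ∈ univ.map liftSome, ν (frestrictLe n ⁻¹' {h}) :=
        (sum_measure_preimage_singleton _ fun _ _ =>
          measurable_frestrictLe n (measurableSet_singleton _)).symm
    _ = _ := sum_map _ _ _

lemma measure_alive_eq_lintegral (hμ : IsMarkovLaw (fun s s' => κ s s') s₀ μ)
    (hμζ : IsMarkovLaw (absorbProb ζ κ Acc) (some s₀) μζ) (n : ℕ) :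
    μζ (alive n) = ∫⁻ ω, ζ ^ numAccBefore Acc ω n ∂μ := by
  rw [measure_alive_eq_sum, (dependsOn_pow_numAccBefore ζ Acc n).lintegral_eq_sum]
  refine sum_congr rfl fun g _ => ?_
  rw [preimage_frestrictLe_singleton, preimage_frestrictLe_singleton, mul_comm]
  exact measure_cylinder_some hμ hμζ n (extendLe n g)

lemma measure_compl_reach_eq_lintegral [IsFiniteMeasure μ] [IsFiniteMeasure μζ] (hζ : ζ ≤ 1)
    (hμ : IsMarkovLaw (fun s s' => κ s s') s₀ μ)
    (hμζ : IsMarkovLaw (absorbProb ζ κ Acc) (some s₀) μζ) :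
    μζ Reachᶜ = ∫⁻ ω, ⨅ n, ζ ^ numAccBefore Acc ω n ∂μ := by
  rw [compl_reach_eq_iInter_alive, antitone_alive.measure_iInter
    (fun n => (measurableSet_alive n).nullMeasurableSet) ⟨0, measure_ne_top _ _⟩,
    lintegral_iInf (fun n => (dependsOn_pow_numAccBefore ζ Acc n).measurable)
      (antitone_pow_numAccBefore hζ Acc) (by simp [numAccBefore])]
  simp_rw [measure_alive_eq_lintegral hμ hμζ]

end AbsorbedChain

theorem reach_almost_sure_iff_buchi_almost_sure_general
    {S : Type*} [Fintype S] [MeasurableSpace S] [MeasurableSingletonClass S]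
    (ζ : ℝ≥0∞) (hζ0 : 0 < ζ) (hζ1 : ζ < 1)
    (κ : S → PMF S) (Acc : Set (S × S)) (s₀ : S)
    (μ : Measure (ℕ → S)) [IsProbabilityMeasure μ]
    (hμ : ∀ (n : ℕ) (f : ℕ → S),
      μ {ω | ∀ i ≤ n, ω i = f i} =
        (if f 0 = s₀ then 1 else 0) * ∏ i ∈ Finset.range n, κ (f i) (f (i + 1)))
    (μζ : Measure (ℕ → Option S)) [IsProbabilityMeasure μζ]
    (hμζ : ∀ (n : ℕ) (f : ℕ → Option S),
      μζ {ω | ∀ i ≤ n, ω i = f i} =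
        (if f 0 = some s₀ then 1 else 0) *
          ∏ i ∈ Finset.range n, absorbProb ζ κ Acc (f i) (f (i + 1))) :
    μζ Reach = 1 ↔ μ {ω | numAcc Acc ω = ⊤} = 1 := by
  set G : (ℕ → S) → ℝ≥0∞ := fun ω => ⨅ n, ζ ^ numAccBefore Acc ω n
  have hG : Measurable G :=
    .iInf fun n => (dependsOn_pow_numAccBefore ζ Acc n).measurable
  have hbuchi : {ω | numAcc Acc ω = ⊤} = {ω | G ω = 0} := by
    ext ω
    exact (iInf_pow_numAccBefore_eq_zero_iff hζ0.ne' hζ1 Acc ω).symm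
  rw [← prob_compl_eq_zero_iff measurableSet_reach,
    measure_compl_reach_eq_lintegral hζ1.le hμ hμζ, lintegral_eq_zero_iff hG, hbuchi,
    ← measure_univ (μ := μ)]
  exact ae_iff_measure_eq (hG (measurableSet_singleton 0)).nullMeasurableSet

/-- `μ^ζ(Reach) = 1` if, and only if, `μ(N = ∞) = 1`: the sink is reached almost surely in
the augmented chain iff the Büchi objective holds almost surely in the original chain. -/
theorem reach_almost_sure_iff_buchi_almost_sure
    {S : Type*} [Fintype S] [Nonempty S] [MeasurableSpace S] [MeasurableSingletonClass S]
    (ζ : ℝ≥0∞) (hζ0 : 0 < ζ) (hζ1 : ζ < 1)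
    (κ : S → PMF S) (Acc : Set (S × S)) (s₀ : S)
    (μ : Measure (ℕ → S)) [IsProbabilityMeasure μ]
    (hμ : ∀ (n : ℕ) (f : ℕ → S),
      μ {ω | ∀ i ≤ n, ω i = f i} =
        (if f 0 = s₀ then 1 else 0) * ∏ i ∈ Finset.range n, κ (f i) (f (i + 1)))
    (μζ : Measure (ℕ → Option S)) [IsProbabilityMeasure μζ]
    (hμζ : ∀ (n : ℕ) (f : ℕ → Option S),
      μζ {ω | ∀ i ≤ n, ω i = f i} =
        (if f 0 = some s₀ then 1 else 0) *
          ∏ i ∈ Finset.range n, absorbProb ζ κ Acc (f i) (f (i + 1))) :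
    μζ Reach = 1 ↔ μ {ω | numAcc Acc ω = ⊤} = 1 :=
  reach_almost_sure_iff_buchi_almost_sure_general ζ hζ0 hζ1 κ Acc s₀ μ hμ μζ hμζ
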